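/- arXiv:1401.8135 — 5 statements merged into one kernel-verified Lean document; each statement's English description precedes it below -/
import Mathlib

section
/- For a monotone Boolean function f on N = {1,...,n}, if U is a minimal upper set of f, then the number of maximal lower sets of f is at least |U|. -/
open Finset

/-- A monotone Boolean function on subsets of `{0,…,n-1}`. -/
def MonoBF {n : ℕ} (f : Finset (Fin n) → Bool) : Prop :=
  ∀ ⦃S T : Finset (Fin n)⦄, S ⊆ T → f S ≤ f T

/-- `S` is a minimal upper set of `f`: `f S = 1` and every proper subset has value `0`. -/
def IsMinUpper {n : ℕ} (f : Finset (Fin n) → Bool) (S : Finset (Fin n)) : Prop :=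
  f S = true ∧ ∀ T : Finset (Fin n), T ⊂ S → f T = false

/-- `S` is a maximal lower set of `f`: `f S = 0` and every proper superset has value `1`. -/
def IsMaxLower {n : ℕ} (f : Finset (Fin n) → Bool) (S : Finset (Fin n)) : Prop :=
  f S = false ∧ ∀ T : Finset (Fin n), S ⊂ T → f T = true

instance {n : ℕ} (f : Finset (Fin n) → Bool) : DecidablePred (IsMinUpper f) := by
  intro S; unfold IsMinUpper; infer_instance

instance {n : ℕ} (f : Finset (Fin n) → Bool) : DecidablePred (IsMaxLower f) := by
  intro S; unfold IsMaxLower; infer_instance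

/-- The family `𝒰(f)` of minimal upper sets. -/
def upperSets {n : ℕ} (f : Finset (Fin n) → Bool) : Finset (Finset (Fin n)) :=
  univ.filter (IsMinUpper f)

/-- The family `ℒ(f)` of maximal lower sets. -/
def lowerSets {n : ℕ} (f : Finset (Fin n) → Bool) : Finset (Finset (Fin n)) :=
  univ.filter (IsMaxLower f)

/-- `m(f) = |𝒰(f) ∪ ℒ(f)|`. -/
def mUL {n : ℕ} (f : Finset (Fin n) → Bool) : ℕ :=
  (upperSets f ∪ lowerSets f).card

instance {n : ℕ} : DecidablePred (fun f : Finset (Fin n) → Bool => MonoBF f) := by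
  intro f; unfold MonoBF; infer_instance

/-- `b_j(n)`: the number of monotone Boolean functions on `n` variables with `m(f) = j`. -/
def bCount (n j : ℕ) : ℕ :=
  (univ.filter (fun f : Finset (Fin n) → Bool => MonoBF f ∧ mUL f = j)).card

/-- A deterministic reconstruction algorithm as a binary decision tree: internal nodes
query `f S`, the left branch corresponds to answer `0`, leaves output a function. -/
inductive DTree (n : ℕ) where
  | leaf : (Finset (Fin n) → Bool) → DTree n
  | node : Finset (Fin n) → DTree n → DTree n → DTree n

/-- The function output by the tree on input `f`. -/
def DTree.run {n : ℕ} : DTree n → (Finset (Fin n) → Bool) → (Finset (Fin n) → Bool)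
  | .leaf g, _ => g
  | .node S t0 t1, f => if f S then t1.run f else t0.run f

/-- `A(f)`: the number of queries asked on input `f`. -/
def DTree.cost {n : ℕ} : DTree n → (Finset (Fin n) → Bool) → ℕ
  | .leaf _, _ => 0
  | .node S t0 t1, f => (if f S then t1.cost f else t0.cost f) + 1

/-- The tree correctly reconstructs every monotone Boolean function. -/
def Reconstructs {n : ℕ} (t : DTree n) : Prop :=
  ∀ f : Finset (Fin n) → Bool, MonoBF f → t.run f = f

/-- The tree is `c`-competitive: `A(f) ≤ c · m(f)` for every monotone `f`. -/
def Competitive {n : ℕ} (t : DTree n) (c : ℝ) : Prop :=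
  ∀ f : Finset (Fin n) → Bool, MonoBF f → (t.cost f : ℝ) ≤ c * mUL f

/-- `c*_n`, the optimal competitivity on `n` variables. -/
noncomputable def cStar (n : ℕ) : ℝ :=
  sInf {c : ℝ | ∃ t : DTree n, Reconstructs t ∧ Competitive t c}

/-! For `i ∈ U`, minimality gives `f (U \ {i}) = 0`, so `U \ {i}` extends to a maximal lower set
`L i`. The map `i ↦ L i` is injective: a lower set containing both `U \ {i}` and `U \ {j}` with
`i ≠ j` contains `U`, contradicting monotonicity. -/

lemma exists_isMaxLower_superset {n : ℕ} (f : Finset (Fin n) → Bool) {S : Finset (Fin n)}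
    (hS : f S = false) : ∃ L, IsMaxLower f L ∧ S ⊆ L := by
  obtain ⟨L, hSL, hL⟩ := Finite.exists_le_maximal (p := fun T => f T = false) hS
  refine ⟨L, ⟨hL.prop, fun T hLT => ?_⟩, hSL⟩
  by_contra hT
  exact hLT.not_subset (hL.2 (by simpa using hT) hLT.subset)

lemma Finset.subset_of_erase_subset_of_erase_subset {α : Type*} [DecidableEq α]
    {U L : Finset α} {i j : α} (hij : i ≠ j) (hi : U.erase i ⊆ L) (hj : U.erase j ⊆ L) :
    U ⊆ L := by
  intro x hx
  rcases eq_or_ne x i with rfl | hxi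
  · exact hj (mem_erase.mpr ⟨hij, hx⟩)
  · exact hi (mem_erase.mpr ⟨hxi, hx⟩)

lemma MonoBF.eq_of_erase_subset_of_erase_subset {n : ℕ} {f : Finset (Fin n) → Bool} (hf : MonoBF f)
    {U L : Finset (Fin n)} (hU : f U = true) (hL : f L = false) {i j : Fin n}
    (hi : U.erase i ⊆ L) (hj : U.erase j ⊆ L) : i = j := by
  by_contra hij
  have hle := hf (subset_of_erase_subset_of_erase_subset hij hi hj)
  rw [hU, hL] at hle
  exact absurd hle (by decide)

/-- If `U` is a minimal upper set of a monotone `f`, then `|ℒ(f)| ≥ |U|`. -/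
theorem stmt1 {n : ℕ} (f : Finset (Fin n) → Bool) (hf : MonoBF f)
    (U : Finset (Fin n)) (hU : IsMinUpper f U) :
    U.card ≤ (lowerSets f).card := by
  choose! L hL hUL using fun i (hi : i ∈ U) =>
    exists_isMaxLower_superset f (hU.2 _ (erase_ssubset hi))
  refine card_le_card_of_injOn L (fun i hi => by simpa [lowerSets] using hL i hi) ?_
  intro i hi j hj hij
  exact hf.eq_of_erase_subset_of_erase_subset hU.1 (hL i hi).1 (hUL i hi) (hij ▸ hUL j hj)
end

section
/- For every 1 ≤ i ≤ n, the number b_{i+1}(n) of monotone Boolean functions f on n variables with m(f) = i+1 is at least binomial(n, i). -/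
open Finset

/-!
The disjunction `⋁_{s ∈ S} x_s` of an `i`-set `S` of variables has the singletons `{s}`, `s ∈ S`,
as its minimal upper sets and `Sᶜ` as its only maximal lower set, so `m = i + 1`; distinct `S`
give distinct functions.
-/

def orFun {n : ℕ} (S : Finset (Fin n)) : Finset (Fin n) → Bool :=
  fun T => decide (¬ Disjoint S T)

section orFun

variable {n : ℕ} (S : Finset (Fin n))

lemma orFun_eq_true_iff {T : Finset (Fin n)} : orFun S T = true ↔ ¬ Disjoint S T := by
  simp [orFun]

lemma orFun_eq_false_iff {T : Finset (Fin n)} : orFun S T = false ↔ Disjoint S T := by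
  simp [orFun]

lemma orFun_singleton_eq_true_iff (s : Fin n) : orFun S {s} = true ↔ s ∈ S := by
  rw [orFun_eq_true_iff, disjoint_singleton_right, not_not]

lemma monoBF_orFun : MonoBF (orFun S) := by
  intro T T' hTT'
  rw [Bool.le_iff_imp, orFun_eq_true_iff, orFun_eq_true_iff]
  exact mt (Disjoint.mono_right hTT')

lemma isMinUpper_orFun_iff {T : Finset (Fin n)} :
    IsMinUpper (orFun S) T ↔ ∃ s ∈ S, {s} = T := by
  constructor
  · rintro ⟨hT, hmin⟩
    obtain ⟨s, hsS, hsT⟩ := not_disjoint_iff.1 ((orFun_eq_true_iff S).1 hT)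
    refine ⟨s, hsS, ?_⟩
    by_contra hne
    have hs : orFun S {s} = true := (orFun_singleton_eq_true_iff S s).2 hsS
    rw [hmin {s} (ssubset_of_subset_of_ne (singleton_subset_iff.2 hsT) hne)] at hs
    exact Bool.noConfusion hs
  · rintro ⟨s, hsS, rfl⟩
    refine ⟨(orFun_singleton_eq_true_iff S s).2 hsS, fun T hT => ?_⟩
    rw [ssubset_singleton_iff.1 hT, orFun_eq_false_iff]
    exact disjoint_empty_right S

lemma isMaxLower_orFun_iff {T : Finset (Fin n)} : IsMaxLower (orFun S) T ↔ T = Sᶜ := by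
  have hcompl : orFun S Sᶜ = false := (orFun_eq_false_iff S).2 disjoint_compl_right
  constructor
  · rintro ⟨hT, hmax⟩
    have hsub : T ⊆ Sᶜ := subset_compl_iff_disjoint_left.2 ((orFun_eq_false_iff S).1 hT)
    by_contra hne
    rw [hmax Sᶜ (ssubset_of_subset_of_ne hsub hne)] at hcompl
    exact Bool.noConfusion hcompl
  · rintro rfl
    refine ⟨hcompl, fun T hT => (orFun_eq_true_iff S).2 fun hdisj => ?_⟩
    exact hT.not_subset (subset_compl_iff_disjoint_left.2 hdisj)

lemma upperSets_orFun : upperSets (orFun S) = S.image ({·}) := by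
  ext T
  simp [upperSets, isMinUpper_orFun_iff]

lemma lowerSets_orFun : lowerSets (orFun S) = {Sᶜ} := by
  ext T
  simp [lowerSets, isMaxLower_orFun_iff]

lemma mUL_orFun : mUL (orFun S) = S.card + 1 := by
  have hdisj : Disjoint (S.image ({·})) {Sᶜ} := by
    rw [disjoint_singleton_right, mem_image]
    rintro ⟨s, hsS, hs⟩
    exact mem_compl.1 (hs ▸ mem_singleton_self s) hsS
  rw [mUL, upperSets_orFun, lowerSets_orFun, card_union_of_disjoint hdisj,
    card_image_of_injective _ singleton_injective, card_singleton]

lemma orFun_injective : Function.Injective (orFun (n := n)) := by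
  intro S S' h
  ext s
  rw [← orFun_singleton_eq_true_iff, ← orFun_singleton_eq_true_iff, h]

end orFun

theorem stmt3_general (n i : ℕ) :
    n.choose i ≤ bCount n (i + 1) := by
  have hmaps : ∀ S ∈ powersetCard i (univ : Finset (Fin n)),
      orFun S ∈ univ.filter (fun f => MonoBF f ∧ mUL f = i + 1) := by
    intro S hS
    rw [mem_powersetCard] at hS
    simpa [mUL_orFun, hS.2] using monoBF_orFun S
  calc n.choose i = (powersetCard i (univ : Finset (Fin n))).card := by simp
    _ ≤ bCount n (i + 1) := card_le_card_of_injOn orFun hmaps orFun_injective.injOn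

/-- `b_{i+1}(n) ≥ C(n, i)` for all `1 ≤ i ≤ n`. -/
theorem stmt3 (n i : ℕ) (h1 : 1 ≤ i) (h2 : i ≤ n) :
    n.choose i ≤ bCount n (i + 1) :=
  stmt3_general n i
end

section
/- There are exactly 2·binomial(n,2) monotone Boolean functions f on n variables with m(f) = 3, i.e. b_3(n) = 2·C(n,2). -/
open Finset

/-!
A monotone `f` is determined by its minimal upper sets, and also by its maximal lower sets.
Both families are nonempty unless `f` is constant, when `m(f) = 1`; so `m(f) = 3` forces one
of them to be a singleton. If `𝒰(f) = {P}` then `f` is the conjunction of the variables in `P`,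
whose maximal lower sets are the `|P|` coatoms `N \ {x}`, `x ∈ P`; dually, if `ℒ(f) = {A}` then
`f` is the disjunction of the variables outside `A`. Either way `m(f) = |P| + 1`, so `|P| = 2`,
and the two resulting families of `C(n, 2)` functions are disjoint.
-/

section
variable {n : ℕ} {f : Finset (Fin n) → Bool} {S T : Finset (Fin n)}

def conjOf (P : Finset (Fin n)) : Finset (Fin n) → Bool := fun T => decide (P ⊆ T)

def disjOf (P : Finset (Fin n)) : Finset (Fin n) → Bool := fun T => decide (P ∩ T).Nonempty

lemma monoBF_conjOf (P : Finset (Fin n)) : MonoBF (conjOf P) := by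
  intro S T hST
  simp only [conjOf, Bool.le_iff_imp, decide_eq_true_eq]
  exact fun hPS => hPS.trans hST

lemma monoBF_disjOf (P : Finset (Fin n)) : MonoBF (disjOf P) := by
  intro S T hST
  simp only [disjOf, Bool.le_iff_imp, decide_eq_true_eq]
  exact fun h => h.mono (inter_subset_inter_left hST)

lemma mem_upperSets : S ∈ upperSets f ↔ IsMinUpper f S := by
  simp [upperSets]

lemma mem_lowerSets : S ∈ lowerSets f ↔ IsMaxLower f S := by
  simp [lowerSets]

lemma isMinUpper_iff_minimal : IsMinUpper f S ↔ Minimal (f · = true) S := by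
  simp [IsMinUpper, minimal_iff_forall_lt]

lemma isMaxLower_iff_maximal : IsMaxLower f S ↔ Maximal (f · = false) S := by
  simp [IsMaxLower, maximal_iff_forall_gt]

lemma exists_isMinUpper_subset (hT : f T = true) : ∃ S, IsMinUpper f S ∧ S ⊆ T := by
  obtain ⟨S, hST, hS⟩ := exists_minimal_le_of_wellFoundedLT (f · = true) T hT
  exact ⟨S, isMinUpper_iff_minimal.mpr hS, hST⟩

lemma exists_isMaxLower_superset_s7 (hT : f T = false) : ∃ S, IsMaxLower f S ∧ T ⊆ S := by
  obtain ⟨S, hTS, hS⟩ := exists_maximal_ge_of_wellFoundedGT (f · = false) T hT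
  exact ⟨S, isMaxLower_iff_maximal.mpr hS, hTS⟩

lemma disjoint_upperSets_lowerSets (f : Finset (Fin n) → Bool) :
    Disjoint (upperSets f) (lowerSets f) := by
  refine disjoint_left.mpr fun S hU hL => ?_
  simpa [(mem_upperSets.mp hU).1] using (mem_lowerSets.mp hL).1

lemma mUL_eq_card_add_card (f : Finset (Fin n) → Bool) :
    mUL f = #(upperSets f) + #(lowerSets f) :=
  card_union_of_disjoint (disjoint_upperSets_lowerSets f)

lemma upperSets_conjOf (P : Finset (Fin n)) : upperSets (conjOf P) = {P} := by
  ext S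
  simp only [mem_upperSets, mem_singleton, IsMinUpper, conjOf, decide_eq_true_eq,
    decide_eq_false_iff_not]
  constructor
  · rintro ⟨hPS, hmin⟩
    by_contra hne
    exact hmin P (ssubset_of_subset_of_ne hPS (Ne.symm hne)) subset_rfl
  · rintro rfl
    exact ⟨subset_rfl, fun T hT => hT.not_subset⟩

lemma lowerSets_conjOf (P : Finset (Fin n)) :
    lowerSets (conjOf P) = P.image (univ.erase ·) := by
  ext S
  simp only [mem_lowerSets, IsMaxLower, conjOf, decide_eq_true_eq, decide_eq_false_iff_not,
    mem_image]
  constructor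
  · rintro ⟨hPS, hmax⟩
    obtain ⟨x, hxP, hxS⟩ := not_subset.mp hPS
    refine ⟨x, hxP, (eq_of_subset_of_not_ssubset ?_ fun h => ?_).symm⟩
    · exact fun y hy => mem_erase.mpr ⟨fun hyx => hxS (hyx ▸ hy), mem_univ y⟩
    · exact notMem_erase x univ (hmax _ h hxP)
  · rintro ⟨x, hxP, rfl⟩
    refine ⟨fun h => notMem_erase x univ (h hxP), fun T hT z hzP => ?_⟩
    obtain ⟨y, hyT, hy⟩ := exists_of_ssubset hT
    obtain rfl : y = x := by simpa using hy
    by_cases hzy : z = y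
    · exact hzy ▸ hyT
    · exact hT.subset (mem_erase.mpr ⟨hzy, mem_univ z⟩)

lemma upperSets_disjOf (P : Finset (Fin n)) :
    upperSets (disjOf P) = P.image ({·}) := by
  ext S
  simp only [mem_upperSets, IsMinUpper, disjOf, decide_eq_true_eq, decide_eq_false_iff_not,
    mem_image, not_nonempty_iff_eq_empty]
  constructor
  · rintro ⟨⟨x, hx⟩, hmin⟩
    rw [mem_inter] at hx
    refine ⟨x, hx.1, eq_of_subset_of_not_ssubset (singleton_subset_iff.mpr hx.2) fun h => ?_⟩
    simpa [hx.1] using hmin _ h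
  · rintro ⟨x, hxP, rfl⟩
    refine ⟨⟨x, by simpa using hxP⟩, fun T hT => ?_⟩
    rw [ssubset_singleton_iff.mp hT, inter_empty]

lemma lowerSets_disjOf (P : Finset (Fin n)) : lowerSets (disjOf P) = {Pᶜ} := by
  ext S
  simp only [mem_lowerSets, IsMaxLower, disjOf, decide_eq_true_eq, decide_eq_false_iff_not,
    mem_singleton, not_nonempty_iff_eq_empty]
  constructor
  · rintro ⟨hPS, hmax⟩
    have hS : S ⊆ Pᶜ := le_compl_iff_disjoint_left.mpr (disjoint_iff_inter_eq_empty.mpr hPS)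
    exact eq_of_subset_of_not_ssubset hS fun h => by simpa using hmax _ h
  · rintro rfl
    refine ⟨inter_compl P, fun T hT => ?_⟩
    obtain ⟨y, hyT, hy⟩ := exists_of_ssubset hT
    exact ⟨y, mem_inter.mpr ⟨by simpa using hy, hyT⟩⟩

lemma mUL_conjOf (P : Finset (Fin n)) : mUL (conjOf P) = #P + 1 := by
  rw [mUL_eq_card_add_card, upperSets_conjOf, lowerSets_conjOf, card_singleton,
    card_image_of_injOn fun x _ y _ => (erase_inj univ (mem_univ x)).mp, add_comm]

lemma mUL_disjOf (P : Finset (Fin n)) : mUL (disjOf P) = #P + 1 := by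
  rw [mUL_eq_card_add_card, upperSets_disjOf, lowerSets_disjOf, card_singleton,
    card_image_of_injective _ singleton_injective]

namespace MonoBF

lemma apply_eq_true_iff (hf : MonoBF f) : f T = true ↔ ∃ S ∈ upperSets f, S ⊆ T := by
  constructor
  · intro hT
    obtain ⟨S, hS, hST⟩ := exists_isMinUpper_subset hT
    exact ⟨S, mem_upperSets.mpr hS, hST⟩
  · rintro ⟨S, hS, hST⟩
    exact Bool.eq_true_of_true_le ((mem_upperSets.mp hS).1 ▸ hf hST)

lemma apply_eq_false_iff (hf : MonoBF f) : f T = false ↔ ∃ S ∈ lowerSets f, T ⊆ S := by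
  constructor
  · intro hT
    obtain ⟨S, hS, hTS⟩ := exists_isMaxLower_superset_s7 hT
    exact ⟨S, mem_lowerSets.mpr hS, hTS⟩
  · rintro ⟨S, hS, hTS⟩
    exact Bool.eq_false_of_le_false ((mem_lowerSets.mp hS).1 ▸ hf hTS)

lemma upperSets_nonempty (hf : MonoBF f) (hm : mUL f ≠ 1) : (upperSets f).Nonempty := by
  rw [nonempty_iff_ne_empty]
  intro h
  have hf₀ : f = disjOf ∅ := by
    funext T
    rw [Bool.eq_iff_iff, hf.apply_eq_true_iff, h]
    simp [disjOf]
  rw [hf₀, mUL_disjOf, card_empty] at hm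
  exact hm rfl

lemma lowerSets_nonempty (hf : MonoBF f) (hm : mUL f ≠ 1) : (lowerSets f).Nonempty := by
  rw [nonempty_iff_ne_empty]
  intro h
  have hf₁ : f = conjOf ∅ := by
    funext T
    rw [Bool.eq_iff_iff, ← not_iff_not]
    simp [hf.apply_eq_false_iff, h, conjOf]
  rw [hf₁, mUL_conjOf, card_empty] at hm
  exact hm rfl

lemma eq_conjOf_of_upperSets_eq (hf : MonoBF f) {P : Finset (Fin n)}
    (h : upperSets f = {P}) : f = conjOf P := by
  funext T
  rw [Bool.eq_iff_iff, hf.apply_eq_true_iff, h]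
  simp [conjOf]

lemma eq_disjOf_of_lowerSets_eq (hf : MonoBF f) {A : Finset (Fin n)}
    (h : lowerSets f = {A}) : f = disjOf Aᶜ := by
  funext T
  rw [Bool.eq_iff_iff, ← not_iff_not]
  simp only [Bool.not_eq_true, hf.apply_eq_false_iff, h, disjOf, decide_eq_false_iff_not,
    mem_singleton, exists_eq_left, not_nonempty_iff_eq_empty, ← disjoint_iff_inter_eq_empty,
    disjoint_compl_left_iff]

end MonoBF

lemma monoBF_and_mUL_eq_three_iff :
    MonoBF f ∧ mUL f = 3 ↔ ∃ P : Finset (Fin n), #P = 2 ∧ (f = conjOf P ∨ f = disjOf P) := by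
  constructor
  · rintro ⟨hf, hm⟩
    have hU := (hf.upperSets_nonempty (by omega)).card_pos
    have hL := (hf.lowerSets_nonempty (by omega)).card_pos
    have hsum := mUL_eq_card_add_card f
    obtain hU1 | hL1 : #(upperSets f) = 1 ∨ #(lowerSets f) = 1 := by omega
    · obtain ⟨P, hP⟩ := card_eq_one.mp hU1
      have hfP := hf.eq_conjOf_of_upperSets_eq hP
      refine ⟨P, ?_, .inl hfP⟩
      have := mUL_conjOf P
      rw [← hfP] at this
      omega
    · obtain ⟨A, hA⟩ := card_eq_one.mp hL1
      have hfA := hf.eq_disjOf_of_lowerSets_eq hA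
      refine ⟨Aᶜ, ?_, .inr hfA⟩
      have := mUL_disjOf Aᶜ
      rw [← hfA] at this
      omega
  · rintro ⟨P, hP, rfl | rfl⟩
    · exact ⟨monoBF_conjOf P, by rw [mUL_conjOf, hP]⟩
    · exact ⟨monoBF_disjOf P, by rw [mUL_disjOf, hP]⟩

lemma conjOf_injective : Function.Injective (conjOf (n := n)) := fun P Q h =>
  singleton_injective (by rw [← upperSets_conjOf, h, upperSets_conjOf])

lemma disjOf_injective : Function.Injective (disjOf (n := n)) := fun P Q h =>
  compl_injective (singleton_injective (by rw [← lowerSets_disjOf, h, lowerSets_disjOf]))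

lemma conjOf_ne_disjOf {P : Finset (Fin n)} (hP : #P ≠ 1) (Q : Finset (Fin n)) :
    conjOf P ≠ disjOf Q := by
  intro h
  have hPQ : P ∈ upperSets (disjOf Q) := by simp [← h, upperSets_conjOf]
  rw [upperSets_disjOf] at hPQ
  obtain ⟨x, -, rfl⟩ := mem_image.mp hPQ
  exact hP (card_singleton x)

end

/-- `b_3(n) = 2 · C(n, 2)`. -/
theorem stmt7 (n : ℕ) : bCount n 3 = 2 * n.choose 2 := by
  have hset : univ.filter (fun f : Finset (Fin n) → Bool => MonoBF f ∧ mUL f = 3) =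
      (powersetCard 2 univ).image conjOf ∪ (powersetCard 2 univ).image disjOf := by
    ext f
    simp only [mem_filter, mem_univ, true_and, monoBF_and_mUL_eq_three_iff, mem_union,
      mem_image, mem_powersetCard, subset_univ]
    aesop
  have hdisj : Disjoint ((powersetCard 2 univ).image (conjOf (n := n)))
      ((powersetCard 2 univ).image disjOf) := by
    simp only [disjoint_left, mem_image, mem_powersetCard]
    rintro _ ⟨P, ⟨-, hP⟩, rfl⟩ ⟨Q, -, hQP⟩
    exact conjOf_ne_disjOf (by omega) Q hQP.symm
  rw [bCount, hset, card_union_of_disjoint hdisj, card_image_of_injective _ conjOf_injective,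
    card_image_of_injective _ disjOf_injective, card_powersetCard, card_univ, Fintype.card_fin,
    two_mul]
end

section
/- For n = 2, the decision tree that first queries {1}; on answer 0 queries {1,2} (on answer 0 outputs the all-zero function, on answer 1 queries {2} and outputs accordingly); and on answer 1 queries ∅ (on answer 1 outputs the all-one function, on answer 0 queries {2} and outputs accordingly) is a 2-competitive reconstruction algorithm. Combined with the lower bound c*_n ≥ 2, this gives c*_2 = 2. -/
open Finset

/-- The concrete decision tree for `n = 2` from the paper: query `{1}`; on answer `0`
query `{1,2}` (then possibly `{2}`); on answer `1` query `∅` (then possibly `{2}`). -/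
def tree2 : DTree 2 :=
  .node {0}
    (.node Finset.univ
      (.leaf (fun _ => false))
      (.node {1}
        (.leaf (fun T => decide (T = Finset.univ)))
        (.leaf (fun T => decide ((1 : Fin 2) ∈ T)))))
    (.node ∅
      (.node {1}
        (.leaf (fun T => decide ((0 : Fin 2) ∈ T)))
        (.leaf (fun T => decide T.Nonempty)))
      (.leaf (fun _ => true)))

/-!
Correctness and competitiveness of `tree2` are a finite check over the Boolean functions on
the four subsets of `{1,2}`. For the lower bound, a reconstruction algorithm must distinguish
each constant function from a non-constant monotone function agreeing with it on the first
query `S`: the up-set of `S` if `S ≠ ∅`, or the complement of the down-set of `S` if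
`S ≠ univ`. Hence one of the constant functions costs two queries, while it has `m = 1`.
-/

section

variable {n : ℕ}

lemma monoBF_const (b : Bool) : MonoBF (n := n) fun _ => b :=
  fun _ _ _ => le_rfl

lemma monoBF_subset_left (S : Finset (Fin n)) : MonoBF fun T => decide (S ⊆ T) := by
  intro T U hTU
  by_cases h : S ⊆ T
  · simp [h, h.trans hTU]
  · simp [h]

lemma monoBF_not_subset_right (S : Finset (Fin n)) : MonoBF fun T => decide ¬T ⊆ S := by
  intro T U hTU
  by_cases h : U ⊆ S
  · simp [h, hTU.trans h]
  · simp [h]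

lemma mUL_const_false : mUL (n := n) (fun _ => false) = 1 := by
  have hU : upperSets (n := n) (fun _ => false) = ∅ := by
    ext S
    simp [upperSets, IsMinUpper]
  have hL : lowerSets (n := n) (fun _ => false) = {univ} := by
    ext S
    simp only [lowerSets, IsMaxLower, mem_filter, mem_univ, true_and, mem_singleton,
      Bool.false_eq_true, imp_false]
    constructor
    · intro h
      by_contra hS
      exact h univ (ssubset_univ_iff.mpr hS)
    · rintro rfl T hT
      exact not_ssubset_of_subset (subset_univ T) hT
  simp [mUL, hU, hL]

lemma mUL_const_true : mUL (n := n) (fun _ => true) = 1 := by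
  have hU : upperSets (n := n) (fun _ => true) = {∅} := by
    ext S
    simp only [upperSets, IsMinUpper, mem_filter, mem_univ, true_and, mem_singleton,
      Bool.true_eq_false, imp_false]
    constructor
    · intro h
      by_contra hS
      exact h ∅ (empty_ssubset.mpr (nonempty_iff_ne_empty.mpr hS))
    · rintro rfl T hT
      exact not_ssubset_empty T hT
  have hL : lowerSets (n := n) (fun _ => true) = ∅ := by
    ext S
    simp [lowerSets, IsMaxLower]
  simp [mUL, hU, hL]

end

lemma DTree.two_le_cost_const {n : ℕ} (hn : 0 < n) {t : DTree n} (hr : Reconstructs t) :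
    2 ≤ t.cost (fun _ => false) ∨ 2 ≤ t.cost (fun _ => true) := by
  have h0 := hr _ (monoBF_const false)
  have h1 := hr _ (monoBF_const true)
  rcases t with g | ⟨S, g0 | _, g1 | _⟩
  · simpa [DTree.run] using congrFun (h0.symm.trans h1) ∅
  · have hg0 : g0 = fun _ => false := by simpa [DTree.run] using h0
    have hg1 : g1 = fun _ => true := by simpa [DTree.run] using h1
    have huniv : (univ : Finset (Fin n)) ≠ ∅ := univ_nonempty_iff.mpr ⟨⟨0, hn⟩⟩ |>.ne_empty
    by_cases hS : S = univ
    · subst hS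
      have h := congrFun (hr _ (monoBF_subset_left univ)) ∅
      simp [DTree.run, hg1, huniv] at h
    · have h := congrFun (hr _ (monoBF_not_subset_right S)) univ
      simp [DTree.run, hg0, univ_subset_iff, hS] at h
  all_goals simp [DTree.cost]

lemma two_le_of_competitive {n : ℕ} (hn : 0 < n) {t : DTree n} {c : ℝ}
    (hr : Reconstructs t) (hc : Competitive t c) : 2 ≤ c := by
  have of_cost_const : ∀ b : Bool, 2 ≤ t.cost (fun _ => b) → 2 ≤ c := by
    intro b hb
    have hcb := hc _ (monoBF_const b)
    have hm : mUL (n := n) (fun _ => b) = 1 := by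
      cases b
      exacts [mUL_const_false, mUL_const_true]
    rw [hm, Nat.cast_one, mul_one] at hcb
    exact le_trans (by exact_mod_cast hb) hcb
  rcases t.two_le_cost_const hn hr with h | h
  exacts [of_cost_const _ h, of_cost_const _ h]

lemma tree2_reconstructs : Reconstructs tree2 := by
  unfold Reconstructs
  decide

lemma tree2_competitive : Competitive tree2 2 := by
  intro f hf
  have h : tree2.cost f ≤ 2 * mUL f := by
    revert f
    decide
  exact_mod_cast h

/-- The tree `tree2` is a `2`-competitive reconstruction algorithm; combined with the
lower bound `c*_n ≥ 2` this gives `c*_2 = 2`. -/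
theorem stmt15 :
    Reconstructs tree2 ∧ Competitive tree2 2 ∧ cStar 2 = 2 := by
  refine ⟨tree2_reconstructs, tree2_competitive, ?_⟩
  refine IsLeast.csInf_eq ⟨⟨tree2, tree2_reconstructs, tree2_competitive⟩, ?_⟩
  rintro c ⟨t, hr, hc⟩
  exact two_le_of_competitive two_pos hr hc
end

section
/- Every deterministic reconstruction algorithm for monotone Boolean functions on 3 variables has competitivity at least 5/2; that is, c*_3 ≥ 5/2. -/
open Finset

/-! Below competitivity `5/2` a tree would have to identify each constant function
(`m = 1`) within 2 queries, each dictator `xᵢ` (`m = 2`) within 4 queries, and each of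
`xᵢ ∧ (xⱼ ∨ xₖ)`, `xᵢ ∨ (xⱼ ∧ xₖ)` (`m = 4`) within 9 queries. An exhaustive search over
adaptive query strategies, run by the kernel, shows that no tree meets all eleven budgets;
it is sound because it succeeds on any candidate family some decision tree separates within
budget. -/

theorem mUL_pos {n : ℕ} (f : Finset (Fin n) → Bool) : 0 < mUL f := by
  refine Finset.card_pos.mpr ?_
  cases hf : f univ with
  | false => exact ⟨univ, mem_union_right _ <| mem_filter.mpr
      ⟨mem_univ _, hf, fun T hT => absurd (subset_univ T) hT.2⟩⟩
  | true =>
    obtain ⟨S, hS, hmin⟩ :=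
      Finset.exists_minimal (s := univ.filter (f · = true)) ⟨univ, by simp [hf]⟩
    refine ⟨S, mem_union_left _ <| mem_filter.mpr ⟨mem_univ _, (mem_filter.mp hS).2, ?_⟩⟩
    intro T hT
    by_contra hfT
    exact hT.2 (hmin (by simpa using hfT) hT.1)

namespace DTree

variable {n : ℕ}

def queryAll : List (Finset (Fin n)) → (Finset (Fin n) → Bool) → DTree n
  | [], g => leaf g
  | S :: qs, g =>
    node S (queryAll qs (Function.update g S false)) (queryAll qs (Function.update g S true))

theorem run_queryAll (qs : List (Finset (Fin n))) (g f : Finset (Fin n) → Bool)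
    (S : Finset (Fin n)) : (queryAll qs g).run f S = if S ∈ qs then f S else g S := by
  induction qs generalizing g with
  | nil => simp [queryAll, run]
  | cons T qs ih =>
    have hstep :
        (queryAll (T :: qs) g).run f = (queryAll qs (Function.update g T (f T))).run f := by
      cases h : f T <;> simp [queryAll, run, h]
    rw [hstep, ih, Function.update_apply]
    by_cases hST : S = T <;> simp [hST]

theorem cost_queryAll (qs : List (Finset (Fin n))) (g f : Finset (Fin n) → Bool) :
    (queryAll qs g).cost f = qs.length := by
  induction qs generalizing g with
  | nil => rfl
  | cons T qs ih => cases h : f T <;> simp [queryAll, cost, h, ih]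

theorem run_node_of_eq {S : Finset (Fin n)} {t₀ t₁ : DTree n} {f : Finset (Fin n) → Bool}
    {b : Bool} (h : f S = b) : (node S t₀ t₁).run f = (bif b then t₁ else t₀).run f := by
  cases b <;> simp [run, h]

theorem cost_node_of_eq {S : Finset (Fin n)} {t₀ t₁ : DTree n} {f : Finset (Fin n) → Bool}
    {b : Bool} (h : f S = b) : (node S t₀ t₁).cost f = (bif b then t₁ else t₀).cost f + 1 := by
  cases b <;> simp [cost, h]

end DTree

theorem exists_reconstructs_competitive (n : ℕ) :
    ∃ t : DTree n, Reconstructs t ∧ Competitive t (2 ^ n) := by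
  refine ⟨.queryAll (univ : Finset (Finset (Fin n))).toList (fun _ => false), ?_, ?_⟩
  · intro f _
    funext S
    simp [DTree.run_queryAll]
  · intro f _
    have hm : (1 : ℝ) ≤ mUL f := by exact_mod_cast mUL_pos f
    rw [DTree.cost_queryAll, length_toList, card_univ, Fintype.card_finset, Fintype.card_fin]
    push_cast
    exact le_mul_of_one_le_right (by positivity) hm

/-- Exhaustive search for a decision tree that separates the candidates `C` using at most
`budget f - d` queries on each `f ∈ C`. Queries on which all of `C` agree are skipped: they
only waste budget. -/
def separable {n : ℕ} (budget : (Finset (Fin n) → Bool) → ℕ) :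
    ℕ → List (Finset (Fin n) → Bool) → ℕ → Bool
  | fuel, C, d => C.all (fun f => d ≤ budget f) && (C.length ≤ 1 || match fuel with
    | 0 => false
    | k + 1 => decide (∃ S, C.any (fun f => !f S) ∧ C.any (fun f => f S) ∧
        separable budget k (C.filter fun f => !f S) (d + 1) ∧
        separable budget k (C.filter fun f => f S) (d + 1)))

theorem separable_of_length_le_one {n : ℕ} (budget : (Finset (Fin n) → Bool) → ℕ)
    {fuel : ℕ} {C : List (Finset (Fin n) → Bool)} {d : ℕ} (hb : ∀ f ∈ C, d ≤ budget f)
    (hC : C.length ≤ 1) : separable budget fuel C d = true := by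
  cases fuel <;> simpa [separable, hC] using hb

theorem separable_succ_of_split {n : ℕ} (budget : (Finset (Fin n) → Bool) → ℕ)
    {fuel : ℕ} {C : List (Finset (Fin n) → Bool)} {d : ℕ} (hb : ∀ f ∈ C, d ≤ budget f)
    (S : Finset (Fin n)) (h₀ : ∃ f ∈ C, f S = false) (h₁ : ∃ f ∈ C, f S = true)
    (hsep₀ : separable budget fuel (C.filter fun f => !f S) (d + 1) = true)
    (hsep₁ : separable budget fuel (C.filter fun f => f S) (d + 1) = true) :
    separable budget (fuel + 1) C d = true := by
  rw [separable]
  simp only [Bool.and_eq_true, Bool.or_eq_true, List.all_eq_true, decide_eq_true_eq]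
  exact ⟨hb, Or.inr ⟨S, by simpa using h₀, by simpa using h₁, hsep₀, hsep₁⟩⟩

theorem separable_of_reconstructs {n : ℕ} (budget : (Finset (Fin n) → Bool) → ℕ)
    (t : DTree n) {fuel : ℕ} {C : List (Finset (Fin n) → Bool)} {d : ℕ}
    (hC : C.Nodup) (hfuel : C.length ≤ fuel) (hrun : ∀ f ∈ C, t.run f = f)
    (hcost : ∀ f ∈ C, d + t.cost f ≤ budget f) : separable budget fuel C d = true := by
  induction t generalizing fuel C d with
  | leaf g =>
    refine separable_of_length_le_one budget
      (fun f hf => by simpa [DTree.cost] using hcost f hf) ?_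
    have hsub : C ⊆ [g] := fun f hf => by simpa [DTree.run] using (hrun f hf).symm
    simpa using (hC.subperm hsub).length_le
  | node S t₀ t₁ ih₀ ih₁ =>
    have hbranch : ∀ (b : Bool) (C' : List (Finset (Fin n) → Bool)),
        (∀ f ∈ C', f ∈ C ∧ f S = b) → (∀ f ∈ C', (bif b then t₁ else t₀).run f = f) ∧
          ∀ f ∈ C', d + 1 + (bif b then t₁ else t₀).cost f ≤ budget f := by
      intro b C' hC'
      refine ⟨fun f hf => ?_, fun f hf => ?_⟩
      · rw [← DTree.run_node_of_eq (hC' f hf).2]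
        exact hrun f (hC' f hf).1
      · have := hcost f (hC' f hf).1
        rw [DTree.cost_node_of_eq (hC' f hf).2] at this
        omega
    by_cases hall₁ : ∀ f ∈ C, f S = true
    · obtain ⟨hrun₁, hcost₁⟩ := hbranch true C fun f hf => ⟨hf, hall₁ f hf⟩
      exact ih₁ hC hfuel hrun₁ fun f hf => (hcost₁ f hf).trans' (by simp)
    by_cases hall₀ : ∀ f ∈ C, f S = false
    · obtain ⟨hrun₀, hcost₀⟩ := hbranch false C fun f hf => ⟨hf, hall₀ f hf⟩
      exact ih₀ hC hfuel hrun₀ fun f hf => (hcost₀ f hf).trans' (by simp)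
    simp only [not_forall, Bool.not_eq_true, Bool.not_eq_false, exists_prop] at hall₀ hall₁
    obtain ⟨f₀, hf₀, hf₀S⟩ := hall₁
    obtain ⟨f₁, hf₁, hf₁S⟩ := hall₀
    obtain ⟨k, rfl⟩ : ∃ k, fuel = k + 1 :=
      Nat.exists_eq_add_one.mpr ((List.length_pos_of_mem hf₀).trans_le hfuel)
    have hlen₀ : (C.filter fun f => !f S).length < C.length :=
      List.length_filter_lt_length_iff_exists.mpr ⟨f₁, hf₁, by simp [hf₁S]⟩
    have hlen₁ : (C.filter fun f => f S).length < C.length :=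
      List.length_filter_lt_length_iff_exists.mpr ⟨f₀, hf₀, by simp [hf₀S]⟩
    obtain ⟨hrun₀, hcost₀⟩ :=
      hbranch false (C.filter fun f => !f S) fun f hf => by simpa using hf
    obtain ⟨hrun₁, hcost₁⟩ :=
      hbranch true (C.filter fun f => f S) fun f hf => by simpa using hf
    exact separable_succ_of_split budget
      (fun f hf => (Nat.le_add_right _ _).trans (hcost f hf)) S ⟨f₀, hf₀, hf₀S⟩ ⟨f₁, hf₁, hf₁S⟩
      (ih₀ (hC.filter _) (by omega) hrun₀ hcost₀) (ih₁ (hC.filter _) (by omega) hrun₁ hcost₁)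

def hardCandidates : List (Finset (Fin 3) → Bool) :=
  [fun _ => false, fun _ => true,
   fun S => 0 ∈ S, fun S => 1 ∈ S, fun S => 2 ∈ S,
   fun S => 0 ∈ S && (1 ∈ S || 2 ∈ S), fun S => 1 ∈ S && (0 ∈ S || 2 ∈ S),
   fun S => 2 ∈ S && (0 ∈ S || 1 ∈ S),
   fun S => 0 ∈ S || (1 ∈ S && 2 ∈ S), fun S => 1 ∈ S || (0 ∈ S && 2 ∈ S),
   fun S => 2 ∈ S || (0 ∈ S && 1 ∈ S)]

set_option maxRecDepth 2000 in
theorem monoBF_of_mem_hardCandidates : ∀ f ∈ hardCandidates, MonoBF f := by decide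

theorem nodup_hardCandidates : hardCandidates.Nodup := by decide

theorem not_separable_hardCandidates :
    separable (fun f => (5 * mUL f - 1) / 2) hardCandidates.length hardCandidates 0 = false := by
  decide +kernel

theorem exists_five_mul_mUL_le_two_mul_cost (t : DTree 3) (ht : Reconstructs t) :
    ∃ f, MonoBF f ∧ 5 * mUL f ≤ 2 * t.cost f := by
  by_contra! h
  have hsep := separable_of_reconstructs (fun f => (5 * mUL f - 1) / 2) t (d := 0)
    nodup_hardCandidates le_rfl (fun f hf => ht f (monoBF_of_mem_hardCandidates f hf))
    (fun f hf => by have := h f (monoBF_of_mem_hardCandidates f hf); omega)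
  rw [not_separable_hardCandidates] at hsep
  exact Bool.false_ne_true hsep

theorem five_halves_le_of_competitive (t : DTree 3) (ht : Reconstructs t) (c : ℝ)
    (hc : Competitive t c) : 5 / 2 ≤ c := by
  obtain ⟨f, hf, hcost⟩ := exists_five_mul_mUL_le_two_mul_cost t ht
  have h5 : (5 : ℝ) * mUL f ≤ 2 * t.cost f := by exact_mod_cast hcost
  have hm : (0 : ℝ) < mUL f := by exact_mod_cast mUL_pos f
  refine le_of_mul_le_mul_right ?_ hm
  linarith [hc f hf]

/-- Every deterministic reconstruction algorithm on `3` variables has competitivity at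
least `5/2`; that is, `c*_3 ≥ 5/2`. -/
theorem stmt16 :
    (∀ t : DTree 3, Reconstructs t → ∀ c : ℝ, Competitive t c → 5 / 2 ≤ c) ∧
    (5 : ℝ) / 2 ≤ cStar 3 := by
  refine ⟨five_halves_le_of_competitive, le_csInf ?_ ?_⟩
  · obtain ⟨t, ht, hc⟩ := exists_reconstructs_competitive 3
    exact ⟨_, t, ht, hc⟩
  · rintro c ⟨t, ht, hc⟩
    exact five_halves_le_of_competitive t ht c hc
end
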